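/- arXiv:2504.12620 — 5 statements merged into one kernel-verified Lean document; each statement's English description precedes it below -/
import Mathlib

section
/- The signed graph K̂4• (the graph K4• obtained from K4 by subdividing one edge once, with all edges negative except one of the two edges incident to the degree-2 vertex) has fractional balanced chromatic number exactly 5/3: it admits a balanced (5,3)-coloring, and every balanced (p,q)-coloring of K̂4• satisfies 3p ≥ 5q. -/
/-!
A balanced set of `K̂₄•` has at most three vertices: any four of the five vertices contain one of
the negative cycles `0-2-3`, `1-2-3`, `0-2-1-4`, `0-3-1-4`, while the signs along a closed walk
inside a balanced set multiply to `1`. Double counting the vertex–color incidences of a balanced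
`(p, q)`-coloring then gives `5q ≤ 3p`. Conversely, the color sets `123, 124, 135, 245, 345` have
the color classes `012, 013, 024, 134, 234`, each inducing a forest, so each is balanced.
-/

open SimpleGraph

/-- The degree of a vertex (number of neighbors). -/
noncomputable def deg {V : Type*} (G : SimpleGraph V) (v : V) : ℕ :=
  (G.neighborSet v).ncard

/-- A set `X` of vertices of the signed graph `(G, σ)` is balanced if there is an
assignment `s` of `±1` to the vertices with `σ u v = s u * s v` on every edge inside `X`. -/
def IsBalancedSet {V : Type*} (G : SimpleGraph V) (σ : V → V → ℤ) (X : Set V) : Prop :=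
  ∃ s : V → ℤ, (∀ v, s v = 1 ∨ s v = -1) ∧
    ∀ u v, u ∈ X → v ∈ X → G.Adj u v → σ u v = s u * s v

/-- A balanced `(p, φ)`-coloring of the signed graph `(G, σ)`: each vertex `v` receives a
set of `φ v` colors from `{1, …, p}`, and every color class is balanced. -/
def IsBalancedColoring {V : Type*} (G : SimpleGraph V) (σ : V → V → ℤ)
    (p : ℕ) (φ : V → ℕ) (f : V → Finset ℕ) : Prop :=
  (∀ v, f v ⊆ Finset.Icc 1 p) ∧ (∀ v, (f v).card = φ v) ∧
  (∀ i : ℕ, IsBalancedSet G σ {v | i ∈ f v})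

/-- `(G, σ)` admits a balanced `(p, q)`-coloring. -/
def HasBalancedColoring {V : Type*} (G : SimpleGraph V) (σ : V → V → ℤ) (p q : ℕ) : Prop :=
  ∃ f : V → Finset ℕ, IsBalancedColoring G σ p (fun _ => q) f

/-- `σ` is a genuine signature: symmetric and taking values `±1` on edges. -/
def GoodSignature {V : Type*} (G : SimpleGraph V) (σ : V → V → ℤ) : Prop :=
  (∀ u v, σ u v = σ v u) ∧ (∀ u v, G.Adj u v → σ u v = 1 ∨ σ u v = -1)

/-- `K₄•`: the graph obtained from `K₄` (on vertices `0,1,2,3`) by subdividing the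
edge `01` once, the subdivision vertex being `4` (which has degree `2`). -/
def K4Bullet : SimpleGraph (Fin 5) :=
  SimpleGraph.fromEdgeSet
    {s(0, 2), s(0, 3), s(1, 2), s(1, 3), s(2, 3), s(0, 4), s(1, 4)}

/-- The signature of `K̂₄•`: all edges negative except the edge `04`, one of the two
edges incident to the degree-2 vertex `4`, which is positive. -/
def sigmaK4Bullet : Fin 5 → Fin 5 → ℤ :=
  fun u v => if (u = 0 ∧ v = 4) ∨ (u = 4 ∧ v = 0) then 1 else -1

namespace IsBalancedSet

variable {V : Type*} {G : SimpleGraph V} {σ : V → V → ℤ} {X : Set V}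

theorem prod_darts_eq_one (h : IsBalancedSet G σ X) {u : V} (w : G.Walk u u)
    (hw : ∀ x ∈ w.support, x ∈ X) : (w.darts.map fun d => σ d.fst d.snd).prod = 1 := by
  obtain ⟨s, hs, hσ⟩ := h
  have hsq (v : V) : s v * s v = 1 := by rcases hs v with hv | hv <;> simp [hv]
  have telescope {a b : V} (w : G.Walk a b) (hw : ∀ x ∈ w.support, x ∈ X) :
      (w.darts.map fun d => σ d.fst d.snd).prod = s a * s b := by
    induction w with
    | nil => simp [hsq]
    | @cons a c b hadj w ih =>
      simp only [Walk.support_cons, List.mem_cons, forall_eq_or_imp] at hw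
      rw [Walk.darts_cons, List.map_cons, List.prod_cons, ih hw.2,
        hσ a c hw.1 (hw.2 c w.start_mem_support) hadj]
      linear_combination s a * s b * hsq c
  rw [telescope w hw, hsq]

end IsBalancedSet

theorem IsBalancedColoring.card_mul_le {V : Type*} [Fintype V] {G : SimpleGraph V}
    {σ : V → V → ℤ} {p q k : ℕ} {f : V → Finset ℕ}
    (hf : IsBalancedColoring G σ p (fun _ => q) f)
    (hk : ∀ X : Finset V, IsBalancedSet G σ X → X.card ≤ k) :
    Fintype.card V * q ≤ p * k := by
  obtain ⟨hsub, hcard, hbal⟩ := hf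
  have := Finset.card_mul_le_card_mul (fun v i => i ∈ f v) (s := Finset.univ)
    (t := Finset.Icc 1 p) (m := q) (n := k) ?_ ?_
  · simpa using this
  · intro v _
    rw [Finset.bipartiteAbove, Finset.filter_mem_eq_inter, Finset.inter_eq_right.mpr (hsub v),
      hcard]
  · intro i _
    exact hk _ (by simpa [Finset.bipartiteBelow] using hbal i)

theorem k4Bullet_adj_iff (u v : Fin 5) : K4Bullet.Adj u v ↔
    s(u, v) ∈ ({s(0, 2), s(0, 3), s(1, 2), s(1, 3), s(2, 3), s(0, 4), s(1, 4)} :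
      Finset (Sym2 (Fin 5))) := by
  simp only [K4Bullet, SimpleGraph.fromEdgeSet_adj, Set.mem_insert_iff, Set.mem_singleton_iff]
  revert u v
  decide

instance : DecidableRel K4Bullet.Adj := fun u v => decidable_of_iff _ (k4Bullet_adj_iff u v).symm

theorem exists_negative_cycle_subset {X : Finset (Fin 5)} (hX : 4 ≤ X.card) :
    {0, 2, 3} ⊆ X ∨ {1, 2, 3} ⊆ X ∨ {0, 2, 1, 4} ⊆ X ∨ {0, 3, 1, 4} ⊆ X := by
  revert X
  decide

theorem card_le_three_of_isBalancedSet {X : Finset (Fin 5)}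
    (h : IsBalancedSet K4Bullet sigmaK4Bullet X) : X.card ≤ 3 := by
  by_contra! hX
  have negative {u : Fin 5} (w : K4Bullet.Walk u u) (hw : ∀ x ∈ w.support, x ∈ X)
      (hneg : (w.darts.map fun d => sigmaK4Bullet d.fst d.snd).prod = -1) : False := by
    have := h.prod_darts_eq_one w (by simpa using hw)
    omega
  rcases exists_negative_cycle_subset hX with hs | hs | hs | hs <;>
    simp only [Finset.insert_subset_iff, Finset.singleton_subset_iff] at hs
  · exact negative (.cons (by decide : K4Bullet.Adj 0 2) (.cons (by decide : K4Bullet.Adj 2 3)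
      (.cons (by decide : K4Bullet.Adj 3 0) .nil))) (by simp [hs]) (by decide)
  · exact negative (.cons (by decide : K4Bullet.Adj 1 2) (.cons (by decide : K4Bullet.Adj 2 3)
      (.cons (by decide : K4Bullet.Adj 3 1) .nil))) (by simp [hs]) (by decide)
  · exact negative (.cons (by decide : K4Bullet.Adj 0 2) (.cons (by decide : K4Bullet.Adj 2 1)
      (.cons (by decide : K4Bullet.Adj 1 4) (.cons (by decide : K4Bullet.Adj 4 0) .nil))))
      (by simp [hs]) (by decide)
  · exact negative (.cons (by decide : K4Bullet.Adj 0 3) (.cons (by decide : K4Bullet.Adj 3 1)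
      (.cons (by decide : K4Bullet.Adj 1 4) (.cons (by decide : K4Bullet.Adj 4 0) .nil))))
      (by simp [hs]) (by decide)

def k4BulletColoring : Fin 5 → Finset ℕ := ![{1, 2, 3}, {1, 2, 4}, {1, 3, 5}, {2, 4, 5}, {3, 4, 5}]

def k4BulletSwitching (i : ℕ) (v : Fin 5) : ℤ :=
  if (i, v) ∈ ({(1, 2), (2, 3), (3, 2), (4, 3), (4, 4), (5, 3)} : Finset (ℕ × Fin 5)) then -1
  else 1

theorem isBalancedSet_k4BulletColoring (i : ℕ) :
    IsBalancedSet K4Bullet sigmaK4Bullet {v | i ∈ k4BulletColoring v} := by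
  refine ⟨k4BulletSwitching i, fun v => by unfold k4BulletSwitching; split_ifs <;> simp, ?_⟩
  intro u v (hu : i ∈ k4BulletColoring u) (hv : i ∈ k4BulletColoring v) huv
  have hi : i ∈ Finset.Icc 1 5 := (by decide : ∀ u, k4BulletColoring u ⊆ Finset.Icc 1 5) u hu
  revert u v hu hv huv
  revert i
  decide

theorem hasBalancedColoring_k4Bullet : HasBalancedColoring K4Bullet sigmaK4Bullet 5 3 :=
  ⟨k4BulletColoring, by decide, by decide, isBalancedSet_k4BulletColoring⟩

/-- `K̂₄•` has fractional balanced chromatic number exactly `5/3`: it admits a balanced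
`(5, 3)`-coloring, and every balanced `(p, q)`-coloring of it satisfies `3p ≥ 5q`. -/
theorem stmt_3 :
    HasBalancedColoring K4Bullet sigmaK4Bullet 5 3 ∧
    ∀ (p q : ℕ) (f : Fin 5 → Finset ℕ),
      IsBalancedColoring K4Bullet sigmaK4Bullet p (fun _ => q) f →
        5 * q ≤ 3 * p := by
  refine ⟨hasBalancedColoring_k4Bullet, fun p q f hf => ?_⟩
  have := hf.card_mul_le fun X hX => card_le_three_of_isBalancedSet hX
  simp only [Fintype.card_fin] at this
  linarith
end

section
/- For every integer k ≥ 5, the negative cycle C_{−k} (a cycle on k vertices whose product of edge signs is −1) admits a balanced (5,4)-coloring. -/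
open SimpleGraph

/-- The cycle graph on `ZMod k`: `u` is adjacent to `u + 1`. -/
def cycleZ (k : ℕ) : SimpleGraph (ZMod k) :=
  SimpleGraph.fromRel (fun u v => v = u + 1)

/-! Colour vertex `v` of the cycle with every colour but `v % 5 + 1`. As `k ≥ 5`, every colour
is missed by some vertex, so every colour class lies on a path of the cycle. A set of vertices
missing `w` is balanced: if `s v` is the product of the signs along the arc from `w + 1` to `v`,
then `σ u (u + 1) = s u * s (u + 1)` for every `u ≠ w`. -/

namespace ZMod

lemma val_add_one_of_add_one_ne_zero {n : ℕ} [NeZero n] {a : ZMod n} (h : a + 1 ≠ 0) :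
    (a + 1).val = a.val + 1 := by
  have hlt := a.val_lt
  rcases Nat.lt_or_ge (a.val + 1) n with hn | hn
  · rw [val_add, val_one_eq_one_mod]
    rcases Nat.lt_or_ge 1 n with h1 | h1
    · rw [Nat.mod_eq_of_lt h1, Nat.mod_eq_of_lt hn]
    · omega
  · have hcast : a + 1 = ((a.val + 1 : ℕ) : ZMod n) := by push_cast [natCast_zmod_val]; rfl
    rw [hcast, show a.val + 1 = n by omega, natCast_self] at h
    exact absurd rfl h

end ZMod

section SignedCycle

variable {k : ℕ} (σ : ZMod k → ZMod k → ℤ)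

lemma cycleZ_adj_add_one (hk : 1 < k) (x : ZMod k) : (cycleZ k).Adj x (x + 1) := by
  have : Fact (1 < k) := ⟨hk⟩
  rw [cycleZ, fromRel_adj]
  exact ⟨fun h => one_ne_zero (left_eq_add.mp h), Or.inl rfl⟩

lemma GoodSignature.isUnit_cycleZ (hk : 1 < k) (hσ : GoodSignature (cycleZ k) σ) (x : ZMod k) :
    IsUnit (σ x (x + 1)) :=
  Int.isUnit_iff.mpr (hσ.2 _ _ (cycleZ_adj_add_one hk x))

def arcSign (w v : ZMod k) : ℤ :=
  ∏ j ∈ Finset.range (v - (w + 1)).val, σ (w + 1 + j) (w + 1 + j + 1)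

lemma isUnit_arcSign (hσ : ∀ x, IsUnit (σ x (x + 1))) (w v : ZMod k) :
    IsUnit (arcSign σ w v) :=
  IsUnit.prod_iff.mpr fun _ _ => hσ _

lemma arcSign_add_one [NeZero k] {w u : ZMod k} (hu : u ≠ w) :
    arcSign σ w (u + 1) = arcSign σ w u * σ u (u + 1) := by
  have hne : u - (w + 1) + 1 ≠ 0 := by
    rw [show u - (w + 1) + 1 = u - w by ring]
    exact sub_ne_zero.mpr hu
  rw [arcSign, arcSign, show u + 1 - (w + 1) = u - (w + 1) + 1 by ring,
    ZMod.val_add_one_of_add_one_ne_zero hne, Finset.prod_range_succ, ZMod.natCast_zmod_val,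
    add_sub_cancel]

lemma isBalancedSet_cycleZ_of_notMem (hk : 1 < k) (hσ : GoodSignature (cycleZ k) σ)
    {X : Set (ZMod k)} {w : ZMod k} (hw : w ∉ X) : IsBalancedSet (cycleZ k) σ X := by
  have : NeZero k := ⟨by omega⟩
  have hunit := isUnit_arcSign σ (hσ.isUnit_cycleZ σ hk) w
  have hedge : ∀ u ∈ X, σ u (u + 1) = arcSign σ w u * arcSign σ w (u + 1) := by
    intro u hu
    rw [arcSign_add_one σ (ne_of_mem_of_not_mem hu hw), ← mul_assoc,
      Int.isUnit_mul_self (hunit u), one_mul]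
  refine ⟨arcSign σ w, fun v => Int.isUnit_iff.mp (hunit v), ?_⟩
  rintro u v hu hv ⟨-, rfl | rfl⟩
  · exact hedge u hu
  · rw [hσ.1, hedge v hv, mul_comm]

lemma hasBalancedColoring_cycleZ {p : ℕ} (hk : 1 < k) (hp : 0 < p) (hpk : p ≤ k)
    (hσ : GoodSignature (cycleZ k) σ) : HasBalancedColoring (cycleZ k) σ p (p - 1) := by
  refine ⟨fun v => (Finset.Icc 1 p).erase (v.val % p + 1), fun v => Finset.erase_subset _ _,
    fun v => ?_, fun i => ?_⟩
  · rw [Finset.card_erase_of_mem (Finset.mem_Icc.mpr ⟨by omega, Nat.mod_lt _ hp⟩),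
      Nat.card_Icc, Nat.add_sub_cancel]
  by_cases hi : i ∈ Finset.Icc 1 p
  · obtain ⟨hi1, hip⟩ := Finset.mem_Icc.mp hi
    apply isBalancedSet_cycleZ_of_notMem σ hk hσ (w := ((i - 1 : ℕ) : ZMod k))
    dsimp only [Set.mem_ofPred_eq]
    rw [ZMod.val_natCast_of_lt (by omega), Nat.mod_eq_of_lt (by omega),
      Nat.sub_add_cancel hi1]
    exact Finset.notMem_erase _ _
  · exact isBalancedSet_cycleZ_of_notMem σ hk hσ (w := 0) fun h => hi (Finset.erase_subset _ _ h)

end SignedCycle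

theorem stmt_6_general (k : ℕ) (hk : 5 ≤ k) (σ : ZMod k → ZMod k → ℤ)
    (hσ : GoodSignature (cycleZ k) σ) :
    HasBalancedColoring (cycleZ k) σ 5 4 :=
  hasBalancedColoring_cycleZ σ (by omega) (by norm_num) hk hσ

/-- For every `k ≥ 5`, every negative cycle on `k` vertices (the product of the edge
signs equals `-1`) admits a balanced `(5, 4)`-coloring. -/
theorem stmt_6 (k : ℕ) (hk : 5 ≤ k) (σ : ZMod k → ZMod k → ℤ)
    (hσ : GoodSignature (cycleZ k) σ)
    (hneg : (∏ i : Fin k, σ ((i : ℕ) : ZMod k) (((i : ℕ) : ZMod k) + 1)) = -1) :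
    HasBalancedColoring (cycleZ k) σ 5 4 :=
  stmt_6_general k hk σ hσ
end

section
/- Every signed simple graph on at most 4 vertices whose signature is not switching equivalent to the all-negative complete graph (K4,−) admits a balanced (3,2)-coloring. -/
/-!
A balanced `(3, 2)`-colouring amounts to choosing for every vertex the one colour it misses, so
that for each colour `k` the set of vertices not missing `k` is balanced. Sets of at most two
vertices are always balanced, and a set of three vertices is balanced unless it spans a negative
triangle.

On at most three vertices, distinct missing colours leave classes of at most two vertices. On
four vertices it suffices to find `c ≠ d` whose complements `{c}ᶜ`, `{d}ᶜ` are balanced: `c`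
misses one colour, `d` another, the remaining vertices the third, whose class is `{c, d}`. If an
edge `uv` is absent, the two triangles containing `u` and `v` are not negative. If `G = K₄`, every
edge lies in exactly two of the four triangles, so the product of the four triangle signs is `1`:
either two triangles are positive, or all four are negative, which means that `σ` is switching
equivalent to the all-negative signature.
-/

open SimpleGraph

/-- `(G, σ)` is switching equivalent to `(K₄, -)`: `G` is isomorphic to the complete
graph on four vertices and `σ` is obtained from the all-negative signature by switching
at a set of vertices. -/
def SwitchEquivAllNegK4 {V : Type*} (G : SimpleGraph V) (σ : V → V → ℤ) : Prop :=
  Nonempty (G ≃g (⊤ : SimpleGraph (Fin 4))) ∧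
  ∃ s : V → ℤ, (∀ v, s v = 1 ∨ s v = -1) ∧ ∀ u v, G.Adj u v → σ u v = -(s u * s v)

lemma exists_eq_or_eq_or_eq_or_eq_of_card_eq_four {V : Type*} [Fintype V]
    (hV : Fintype.card V = 4) :
    ∃ a b c d : V, b ≠ a ∧ c ≠ a ∧ d ≠ a ∧ b ≠ c ∧ b ≠ d ∧ c ≠ d ∧
      ∀ v, v = a ∨ v = b ∨ v = c ∨ v = d := by
  let e := (Fintype.equivFinOfCardEq hV).symm
  refine ⟨e 0, e 1, e 2, e 3, e.injective.ne (by decide), e.injective.ne (by decide),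
    e.injective.ne (by decide), e.injective.ne (by decide), e.injective.ne (by decide),
    e.injective.ne (by decide), fun v => ?_⟩
  obtain ⟨i, rfl⟩ := e.surjective v
  fin_cases i <;> simp

lemma triangle_signs_through_mul_eq {R : Type*} [CommRing R] {ab ac ad bc bd cd : R}
    (hab : ab * ab = 1) (hac : ac * ac = 1) (had : ad * ad = 1) :
    ab * bc * ac * (ab * bd * ad) * (ac * cd * ad) = bc * cd * bd := by
  linear_combination bc * cd * bd * ac * ac * ad * ad * hab + bc * cd * bd * ad * ad * hac
    + bc * cd * bd * had

section

variable {V : Type*} {G : SimpleGraph V} {σ : V → V → ℤ}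

lemma IsBalancedSet.mono {X Y : Set V} (hY : IsBalancedSet G σ Y) (hXY : X ⊆ Y) :
    IsBalancedSet G σ X := by
  obtain ⟨s, hs, hsY⟩ := hY
  exact ⟨s, hs, fun u v hu hv => hsY u v (hXY hu) (hXY hv)⟩

/-- Switching at the neighbours `v` of `r` with `σ r v = -1` makes every edge at `r` positive;
the other edges then become positive because they close positive triangles with `r`. -/
lemma isBalancedSet_of_triangles_through (hσ : GoodSignature G σ) {X : Set V} (r : V)
    (h : ∀ u ∈ X, ∀ v ∈ X, u ≠ r → v ≠ r → G.Adj u v →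
      G.Adj r u ∧ G.Adj r v ∧ σ u v = σ r u * σ r v) :
    IsBalancedSet G σ X := by
  classical
  refine ⟨fun v => if G.Adj r v then σ r v else 1, fun v => ?_, fun u v hu hv huv => ?_⟩
  · dsimp only
    split_ifs with hv
    exacts [hσ.2 r v hv, Or.inl rfl]
  · by_cases hur : u = r
    · subst hur
      simp [huv]
    by_cases hvr : v = r
    · subst hvr
      simp [huv.symm, hσ.1 u v]
    obtain ⟨hru, hrv, heq⟩ := h u hu v hv hur hvr huv
    simp [hru, hrv, heq]

lemma isBalancedSet_of_ncard_le_two [Finite V] (hσ : GoodSignature G σ) {X : Set V}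
    (hX : X.ncard ≤ 2) : IsBalancedSet G σ X := by
  rcases X.eq_empty_or_nonempty with rfl | ⟨r, hr⟩
  · exact ⟨fun _ => 1, fun _ => Or.inl rfl, fun _ _ hu => hu.elim⟩
  refine isBalancedSet_of_triangles_through hσ r fun u hu v hv hur hvr huv => ?_
  have h3 : ({r, u, v} : Set V).ncard = 3 :=
    Set.ncard_eq_three.2 ⟨r, u, v, Ne.symm hur, Ne.symm hvr, huv.ne, rfl⟩
  have := Set.ncard_le_ncard
    (Set.insert_subset hr (Set.insert_subset hu (Set.singleton_subset_iff.2 hv))) X.toFinite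
  omega

lemma isBalancedSet_triple (hσ : GoodSignature G σ) {a b c : V}
    (h : G.Adj a b → G.Adj b c → G.Adj a c → σ a b * σ b c * σ a c = 1) :
    IsBalancedSet G σ {a, b, c} := by
  by_cases hab : G.Adj a b
  · by_cases hac : G.Adj a c
    · have hbc : G.Adj b c → σ b c = σ a b * σ a c := fun hbc => by
        have hprod := h hab hbc hac
        rcases hσ.2 a b hab with h1 | h1 <;> rcases hσ.2 a c hac with h2 | h2 <;>
          rw [h1, h2] at hprod ⊢ <;> linarith
      have hcb : G.Adj c b → σ c b = σ a c * σ a b := fun hcb => by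
        rw [hσ.1, hbc hcb.symm, mul_comm]
      refine isBalancedSet_of_triangles_through hσ a fun u hu v hv hua hva huv => ?_
      simp only [Set.mem_insert_iff, Set.mem_singleton_iff] at hu hv
      rcases hu with rfl | rfl | rfl <;> rcases hv with rfl | rfl | rfl <;>
        simp_all [G.adj_comm]
    · refine isBalancedSet_of_triangles_through hσ b fun u hu v hv hub hvb huv => ?_
      simp only [Set.mem_insert_iff, Set.mem_singleton_iff] at hu hv
      rcases hu with rfl | rfl | rfl <;> rcases hv with rfl | rfl | rfl <;> simp_all [G.adj_comm]
  · refine isBalancedSet_of_triangles_through hσ c fun u hu v hv huc hvc huv => ?_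
    simp only [Set.mem_insert_iff, Set.mem_singleton_iff] at hu hv
    rcases hu with rfl | rfl | rfl <;> rcases hv with rfl | rfl | rfl <;> simp_all [G.adj_comm]

lemma hasBalancedColoring_of_missing (g : V → Fin 3)
    (hg : ∀ k, IsBalancedSet G σ {v | g v ≠ k}) : HasBalancedColoring G σ 3 2 := by
  refine ⟨fun v => (Finset.Icc 1 3).erase (g v + 1), fun v => Finset.erase_subset _ _,
    fun v => ?_, fun i => ?_⟩
  · rw [Finset.card_erase_of_mem (by simp)]
    rfl
  · by_cases hi : i ∈ Finset.Icc 1 3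
    · rw [Finset.mem_Icc] at hi
      refine (hg ⟨i - 1, by omega⟩).mono fun v hv hvi => ?_
      simp only [Set.mem_ofPred_eq, Finset.mem_erase, hvi] at hv
      omega
    · exact (hg 0).mono fun v hv => absurd (Finset.mem_of_mem_erase hv) hi

lemma hasBalancedColoring_of_card_le_three [Fintype V] (hσ : GoodSignature G σ)
    (hV : Fintype.card V ≤ 3) : HasBalancedColoring G σ 3 2 := by
  obtain ⟨g⟩ : Nonempty (V ↪ Fin 3) :=
    Function.Embedding.nonempty_of_card_le (by simpa using hV)
  refine hasBalancedColoring_of_missing g fun k => isBalancedSet_of_ncard_le_two hσ ?_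
  calc {v | g v ≠ k}.ncard ≤ {j : Fin 3 | j ≠ k}.ncard :=
        Set.ncard_le_ncard_of_injOn g (fun _ hv => hv) g.injective.injOn
    _ = 2 := by
        rw [Set.ncard_eq_toFinset_card']
        fin_cases k <;> rfl

lemma hasBalancedColoring_of_balanced_compl [Finite V] (hσ : GoodSignature G σ) {c d : V}
    (hcd : c ≠ d) (hc : IsBalancedSet G σ {c}ᶜ) (hd : IsBalancedSet G σ {d}ᶜ) :
    HasBalancedColoring G σ 3 2 := by
  classical
  refine hasBalancedColoring_of_missing (fun v => if v = c then 0 else if v = d then 1 else 2)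
    fun k => ?_
  fin_cases k
  · exact hc.mono fun v hv hvc => hv (if_pos hvc)
  · exact hd.mono fun v hv hvd => hv (by rw [Set.mem_singleton_iff.1 hvd]; simp [hcd.symm])
  · refine (isBalancedSet_of_ncard_le_two hσ (Set.ncard_pair hcd).le).mono fun v hv => ?_
    by_contra hvcd
    simp_all

lemma isBalancedSet_compl_singleton_of_triple (hσ : GoodSignature G σ) {x a b c : V}
    (hcover : ∀ v, v ≠ x → v = a ∨ v = b ∨ v = c)
    (h : G.Adj a b → G.Adj b c → G.Adj a c → σ a b * σ b c * σ a c = 1) :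
    IsBalancedSet G σ {x}ᶜ :=
  (isBalancedSet_triple hσ h).mono fun v hv => by simpa using hcover v hv

lemma exists_balanced_compl_pair_of_not_adj [Fintype V] (hσ : GoodSignature G σ)
    (hV : Fintype.card V = 4) {u v : V} (huv : u ≠ v) (hadj : ¬ G.Adj u v) :
    ∃ c d, c ≠ d ∧ IsBalancedSet G σ {c}ᶜ ∧ IsBalancedSet G σ {d}ᶜ := by
  classical
  have hbal : ∀ x y, ({u, v}ᶜ : Finset V) = {x, y} → IsBalancedSet G σ {x}ᶜ := by
    intro x y hxy
    refine isBalancedSet_compl_singleton_of_triple hσ (a := u) (b := v) (c := y)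
      (fun w hw => ?_) fun h => absurd h hadj
    have := Finset.ext_iff.1 hxy w
    simp only [Finset.mem_compl, Finset.mem_insert, Finset.mem_singleton] at this
    tauto
  obtain ⟨c, d, hcd, hrest⟩ := Finset.card_eq_two.1
    (by rw [Finset.card_compl, Finset.card_pair huv, hV] : ({u, v}ᶜ : Finset V).card = 2)
  exact ⟨c, d, hcd, hbal c d hrest, hbal d c (hrest.trans (Finset.pair_comm c d))⟩

lemma switchEquivAllNegK4_of_negative_triangles [Fintype V] (hσ : GoodSignature G σ)
    (hV : Fintype.card V = 4) (hG : ∀ u v, u ≠ v → G.Adj u v) (a : V)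
    (h : ∀ u v, u ≠ a → v ≠ a → u ≠ v → σ a u * σ u v * σ a v = -1) :
    SwitchEquivAllNegK4 G σ := by
  classical
  have hsq : ∀ v, v ≠ a → σ a v * σ a v = 1 := fun v hv =>
    Int.isUnit_mul_self (Int.isUnit_iff.2 (hσ.2 a v (hG a v hv.symm)))
  have hGtop : G = ⊤ := by
    ext u v
    exact ⟨G.ne_of_adj, hG u v⟩
  subst hGtop
  refine ⟨⟨SimpleGraph.Iso.completeGraph (Fintype.equivFinOfCardEq hV)⟩,
    fun v => if v = a then -1 else σ a v, fun v => ?_, fun u v huv => ?_⟩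
  · dsimp only
    split_ifs with hv
    exacts [Or.inr rfl, hσ.2 a v (hG a v (Ne.symm hv))]
  · have hne : u ≠ v := (⊤ : SimpleGraph V).ne_of_adj huv
    by_cases hu : u = a
    · subst hu
      simp [Ne.symm hne]
    by_cases hv : v = a
    · subst hv
      simp [hu, hσ.1 u v]
    simp only [hu, hv, if_false]
    linear_combination (σ a u * σ a v) * h u v hu hv hne - σ u v * σ a v * σ a v * hsq u hu
      - σ u v * hsq v hv

lemma exists_balanced_compl_pair_or_switchEquivAllNegK4_of_complete [Fintype V]
    (hσ : GoodSignature G σ) (hV : Fintype.card V = 4) (hG : ∀ u v, u ≠ v → G.Adj u v) :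
    (∃ c d, c ≠ d ∧ IsBalancedSet G σ {c}ᶜ ∧ IsBalancedSet G σ {d}ᶜ) ∨
      SwitchEquivAllNegK4 G σ := by
  obtain ⟨a, b, c, d, hba, hca, hda, hbc, hbd, hcd, hcover⟩ :=
    exists_eq_or_eq_or_eq_or_eq_of_card_eq_four hV
  have hunit : ∀ {u v}, u ≠ v → IsUnit (σ u v) := fun huv =>
    Int.isUnit_iff.2 (hσ.2 _ _ (hG _ _ huv))
  have hpm : ∀ {u v w}, u ≠ v → v ≠ w → u ≠ w →
      σ u v * σ v w * σ u w = 1 ∨ σ u v * σ v w * σ u w = -1 := fun huv hvw huw =>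
    Int.isUnit_iff.1 (((hunit huv).mul (hunit hvw)).mul (hunit huw))
  have hsq : ∀ {v}, v ≠ a → σ a v * σ a v = 1 := fun hv =>
    Int.isUnit_mul_self (hunit hv.symm)
  set x := σ a b * σ b c * σ a c
  set y := σ a b * σ b d * σ a d
  set z := σ a c * σ c d * σ a d
  have hBd : x = 1 → IsBalancedSet G σ {d}ᶜ := fun hx =>
    isBalancedSet_compl_singleton_of_triple hσ (fun v hv => by have := hcover v; tauto)
      fun _ _ _ => hx
  have hBc : y = 1 → IsBalancedSet G σ {c}ᶜ := fun hy =>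
    isBalancedSet_compl_singleton_of_triple hσ (fun v hv => by have := hcover v; tauto)
      fun _ _ _ => hy
  have hBb : z = 1 → IsBalancedSet G σ {b}ᶜ := fun hz =>
    isBalancedSet_compl_singleton_of_triple hσ (fun v hv => by have := hcover v; tauto)
      fun _ _ _ => hz
  have hBa : x * y * z = 1 → IsBalancedSet G σ {a}ᶜ := fun hxyz =>
    isBalancedSet_compl_singleton_of_triple hσ (a := b) (b := c) (c := d)
      (fun v hv => by have := hcover v; tauto) fun _ _ _ => by
        rwa [← triangle_signs_through_mul_eq (hsq hba) (hsq hca) (hsq hda)]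
  have hK4 : x = -1 → y = -1 → z = -1 → SwitchEquivAllNegK4 G σ := fun hx hy hz =>
    switchEquivAllNegK4_of_negative_triangles hσ hV hG a fun u v hu hv huv => by
      have hswap : ∀ u v, σ a u * σ u v * σ a v = σ a v * σ v u * σ a u := fun u v => by
        rw [hσ.1 u v]; ring
      rcases (hcover u).resolve_left hu with rfl | rfl | rfl <;>
        rcases (hcover v).resolve_left hv with rfl | rfl | rfl <;>
        first | exact absurd rfl huv | assumption | (rw [hswap]; assumption)
  have hx : x = 1 ∨ x = -1 := hpm hba.symm hbc hca.symm
  have hy : y = 1 ∨ y = -1 := hpm hba.symm hbd hda.symm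
  have hz : z = 1 ∨ z = -1 := hpm hca.symm hcd hda.symm
  rcases hx with hx | hx <;> rcases hy with hy | hy <;> rcases hz with hz | hz
  · exact .inl ⟨c, d, hcd, hBc hy, hBd hx⟩
  · exact .inl ⟨c, d, hcd, hBc hy, hBd hx⟩
  · exact .inl ⟨b, d, hbd, hBb hz, hBd hx⟩
  · exact .inl ⟨a, d, hda.symm, hBa (by rw [hx, hy, hz]; rfl), hBd hx⟩
  · exact .inl ⟨b, c, hbc, hBb hz, hBc hy⟩
  · exact .inl ⟨a, c, hca.symm, hBa (by rw [hx, hy, hz]; rfl), hBc hy⟩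
  · exact .inl ⟨a, b, hba.symm, hBa (by rw [hx, hy, hz]; rfl), hBb hz⟩
  · exact .inr (hK4 hx hy hz)

lemma exists_balanced_compl_pair_or_switchEquivAllNegK4 [Fintype V] (hσ : GoodSignature G σ)
    (hV : Fintype.card V = 4) :
    (∃ c d, c ≠ d ∧ IsBalancedSet G σ {c}ᶜ ∧ IsBalancedSet G σ {d}ᶜ) ∨
      SwitchEquivAllNegK4 G σ := by
  by_cases hG : ∀ u v, u ≠ v → G.Adj u v
  · exact exists_balanced_compl_pair_or_switchEquivAllNegK4_of_complete hσ hV hG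
  · push Not at hG
    obtain ⟨u, v, huv, hadj⟩ := hG
    exact .inl (exists_balanced_compl_pair_of_not_adj hσ hV huv hadj)

end

/-- Every signed simple graph on at most four vertices not switching equivalent to
`(K₄, -)` admits a balanced `(3, 2)`-coloring. -/
theorem stmt_7 {V : Type*} [Fintype V] (G : SimpleGraph V) (σ : V → V → ℤ)
    (hσ : GoodSignature G σ) (hcard : Fintype.card V ≤ 4)
    (hK4 : ¬ SwitchEquivAllNegK4 G σ) :
    HasBalancedColoring G σ 3 2 := by
  rcases hcard.lt_or_eq with hlt | h4
  · exact hasBalancedColoring_of_card_le_three hσ (Nat.le_of_lt_succ hlt)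
  · obtain ⟨c, d, hcd, hc, hd⟩ :=
      (exists_balanced_compl_pair_or_switchEquivAllNegK4 hσ h4).resolve_right hK4
    exact hasBalancedColoring_of_balanced_compl hσ hcd hc hd
end

section
/- Let C4 be the cycle on 4 vertices and let φ4 assign the values 3, 3, 4, 4 to its four vertices (in some order). Then for every signature σ on C4, the signed graph (C4,σ) admits a balanced (5,φ4)-coloring. -/
/-!
A set of vertices of a cycle that misses some vertex `a` lies on the path obtained by cutting
the cycle at `a`, and every path is balanced: propagate signs from `a` along the path.
So it suffices to colour the cycle so that every colour is missing somewhere. On `C_n` with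
colours `1, …, n + 1`, give vertex `v` the colours `1, …, φ v + 1` except `v + 1`: colour
`i ≤ n` is missing at vertex `i - 1`, and colour `n + 1` at any vertex with `φ = n - 1`.
-/

open SimpleGraph

open Finset

theorem ZMod.val_add_one_of_add_one_ne_zero_s9 {n : ℕ} [NeZero n] {x : ZMod n} (hx : x + 1 ≠ 0) :
    (x + 1).val = x.val + 1 := by
  have hcast : ((x.val + 1 : ℕ) : ZMod n) = x + 1 := by
    push_cast [ZMod.natCast_zmod_val]; rfl
  rcases (show x.val + 1 ≤ n from ZMod.val_lt x).lt_or_eq with hlt | heq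
  · rw [← hcast, ZMod.val_cast_of_lt hlt]
  · exact absurd (by rw [← hcast, heq, ZMod.natCast_self]) hx

section CycleZ

variable {n : ℕ} [NeZero n]

theorem cycleZ_isBalancedSet_of_notMem {σ : ZMod n → ZMod n → ℤ}
    (hσ : GoodSignature (cycleZ n) σ) {a : ZMod n} {X : Set (ZMod n)} (ha : a ∉ X) :
    IsBalancedSet (cycleZ n) σ X := by
  set ε : ZMod n → ℤ := fun u => if σ u (u + 1) = 1 then 1 else -1
  have hε_unit : ∀ u, IsUnit (ε u) := fun u => by simp only [ε]; split_ifs <;> simp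
  have hε_edge : ∀ u, (cycleZ n).Adj u (u + 1) → σ u (u + 1) = ε u := fun u h => by
    rcases hσ.2 _ _ h with h1 | h1 <;> simp [ε, h1]
  set s : ZMod n → ℤ := fun v => ∏ j ∈ range (v - a).val, ε (a + j)
  have hs_unit : ∀ v, IsUnit (s v) := fun v => IsUnit.prod_iff.mpr fun j _ => hε_unit _
  have hs_step : ∀ u, u + 1 ≠ a → s (u + 1) = s u * ε u := fun u hu => by
    have hval : (u + 1 - a).val = (u - a).val + 1 := by
      rw [add_sub_right_comm]
      exact ZMod.val_add_one_of_add_one_ne_zero_s9 (by rwa [← add_sub_right_comm, sub_ne_zero])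
    simp only [s, hval, prod_range_succ, ZMod.natCast_zmod_val, add_sub_cancel]
  have hforward : ∀ u, u + 1 ≠ a → (cycleZ n).Adj u (u + 1) → σ u (u + 1) = s u * s (u + 1) :=
    fun u hu hadj => by
      rw [hs_step u hu, ← mul_assoc, Int.isUnit_mul_self (hs_unit u), one_mul, hε_edge u hadj]
  refine ⟨s, fun v => Int.isUnit_iff.mp (hs_unit v), fun u v hu hv hadj => ?_⟩
  obtain ⟨-, rfl | rfl⟩ := (fromRel_adj _ _ _).mp hadj
  · exact hforward u (ne_of_mem_of_not_mem hv ha) hadj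
  · rw [hσ.1, mul_comm]
    exact hforward v (ne_of_mem_of_not_mem hu ha) hadj.symm

theorem cycleZ_exists_isBalancedColoring {σ : ZMod n → ZMod n → ℤ}
    (hσ : GoodSignature (cycleZ n) σ) {φ : ZMod n → ℕ} (hφ : ∀ v, φ v = n - 1 ∨ φ v = n)
    (hw : ∃ w, φ w = n - 1) :
    ∃ f : ZMod n → Finset ℕ, IsBalancedColoring (cycleZ n) σ (n + 1) φ f := by
  have hn := NeZero.pos n
  have hval_le : ∀ v : ZMod n, v.val ≤ φ v := fun v => by
    have := ZMod.val_lt v; rcases hφ v with h | h <;> omega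
  refine ⟨fun v => (Icc 1 (φ v + 1)).erase (v.val + 1), fun v => ?_, fun v => ?_, fun i => ?_⟩
  · exact (erase_subset _ _).trans (Icc_subset_Icc_right (by rcases hφ v with h | h <;> omega))
  · rw [card_erase_of_mem (mem_Icc.mpr ⟨by omega, by have := hval_le v; omega⟩), Nat.card_Icc]
    omega
  obtain ⟨m, hm⟩ : ∃ m : ZMod n, i ∉ (Icc 1 (φ m + 1)).erase (m.val + 1) := by
    by_cases hi : 1 ≤ i ∧ i ≤ n
    · refine ⟨((i - 1 : ℕ) : ZMod n), fun hmem => (mem_erase.mp hmem).1 ?_⟩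
      rw [ZMod.val_cast_of_lt (by omega)]
      omega
    · obtain ⟨w, hφw⟩ := hw
      exact ⟨w, fun hmem => hi (by have := mem_Icc.mp (mem_of_mem_erase hmem); omega)⟩
  exact cycleZ_isBalancedSet_of_notMem hσ (a := m) hm

end CycleZ

/-- For every assignment `φ` of the values `3, 3, 4, 4` to the four vertices of the
cycle `C₄` and every signature `σ`, the signed graph `(C₄, σ)` admits a balanced
`(5, φ)`-coloring. -/
theorem stmt_9 (φ : ZMod 4 → ℕ)
    (hφ : ∃ x y : ZMod 4, x ≠ y ∧ φ x = 4 ∧ φ y = 4 ∧ ∀ w, w ≠ x → w ≠ y → φ w = 3)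
    (σ : ZMod 4 → ZMod 4 → ℤ) (hσ : GoodSignature (cycleZ 4) σ) :
    ∃ f : ZMod 4 → Finset ℕ, IsBalancedColoring (cycleZ 4) σ 5 φ f := by
  obtain ⟨x, y, -, hx, hy, hrest⟩ := hφ
  have hvalues : ∀ v, φ v = 4 - 1 ∨ φ v = 4 := fun v => by
    by_cases hvx : v = x
    · exact .inr (hvx ▸ hx)
    by_cases hvy : v = y
    · exact .inr (hvy ▸ hy)
    exact .inl (hrest v hvx hvy)
  obtain ⟨w, hwx, hwy⟩ := (by decide : ∀ x y : ZMod 4, ∃ w, w ≠ x ∧ w ≠ y) x y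
  exact cycleZ_exists_isBalancedColoring hσ hvalues ⟨w, hrest w hwx hwy⟩
end

section
/- For every signature σ on K4• (the graph obtained from the complete graph K4 by subdividing one edge exactly once), the signed graph (K4•,σ) admits a balanced (5,3)-coloring. -/
open SimpleGraph

/-! Every color class of `k4BulletColoring` induces a star in `K₄•`, and a star is balanced
under every signature: put `s = 1` at the center `c` and `s v = σ c v` at each leaf `v`. -/

lemma isBalancedSet_of_star {V : Type*} {G : SimpleGraph V} {σ : V → V → ℤ}
    (hσ : GoodSignature G σ) {X : Set V} (c : V)
    (hstar : ∀ u v, u ∈ X → v ∈ X → G.Adj u v → u = c ∨ v = c) :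
    IsBalancedSet G σ X := by
  classical
  obtain ⟨hsym, hval⟩ := hσ
  refine ⟨fun v => if G.Adj c v then σ c v else 1, fun v => ?_, fun u v hu hv hadj => ?_⟩
  · by_cases hv : G.Adj c v
    · simpa [hv] using hval c v hv
    · simp [hv]
  · rcases hstar u v hu hv hadj with rfl | rfl
    · simp [hadj]
    · simp [hadj.symm, hsym u v]

def k4BulletColorClassCenter : ℕ → Fin 5
  | 1 => 2
  | 2 => 3
  | 3 => 0
  | 4 => 1
  | _ => 3

lemma k4BulletColoring_colorClass_star (i : ℕ) (u v : Fin 5) (hu : i ∈ k4BulletColoring u)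
    (hv : i ∈ k4BulletColoring v) (hadj : K4Bullet.Adj u v) :
    u = k4BulletColorClassCenter i ∨ v = k4BulletColorClassCenter i := by
  fin_cases u <;> fin_cases v <;> simp_all [k4BulletColoring, K4Bullet] <;>
    obtain rfl | rfl | rfl := hu <;> simp_all [k4BulletColorClassCenter]

/-- For every signature `σ` on `K₄•`, the signed graph `(K₄•, σ)` admits a balanced
`(5, 3)`-coloring. -/
theorem stmt_10 (σ : Fin 5 → Fin 5 → ℤ) (hσ : GoodSignature K4Bullet σ) :
    HasBalancedColoring K4Bullet σ 5 3 :=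
  ⟨k4BulletColoring, by decide, by decide,
    fun i => isBalancedSet_of_star hσ _ (k4BulletColoring_colorClass_star i)⟩
end
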